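/- Let d ≥ 1 be an integer and let (g_k)_{k≥1} be non-negative integers with g_k = 0 unless d | k, such that g(z) = Σ_{k≥1} g_k z^k belongs to the class S_d with radius of convergence ρ ∈ (0,1) and g(ρ) < 1. Define C(z) = Σ_{k≥1} (φ(k)/k)·log(1/(1 − g(z^k))), where φ is Euler's totient function and the right-hand side is expanded as a power series (each coefficient is a well-defined finite non-negative real). Then [z^n] C(z) ~ (1 − g(ρ))^{−1}·[z^n] g(z) as n → ∞ along multiples of d. -/

import Mathlib

/-- A power series with coefficient sequence `g`, non-negative coefficients and radius of
convergence `ρ ∈ (0,∞)`, belongs to the class `𝒮_d`. -/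
def SubexpClass (d : ℕ) (g : ℕ → ℝ) (ρ : ℝ) : Prop :=
  1 ≤ d ∧ 0 < ρ ∧ (∀ n, 0 ≤ g n) ∧
  (∀ n, ¬ d ∣ n → g n = 0) ∧
  (∃ N, ∀ n, N ≤ n → d ∣ n → 0 < g n) ∧
  Summable (fun n => g n * ρ ^ n) ∧
  (∀ r : ℝ, ρ < r → ¬ Summable (fun n => g n * r ^ n)) ∧
  Filter.Tendsto (fun m => g (d * m) / g (d * m + d)) Filter.atTop (nhds (ρ ^ d)) ∧
  Filter.Tendsto
    (fun m => (∑ i ∈ Finset.range (d * m + 1), g i * g (d * m - i)) / g (d * m))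
    Filter.atTop (nhds (2 * ∑' n, g n * ρ ^ n))

/-!
Put `b n = g n ρ ^ n`: then `b` is subexponential with `∑ b = g(ρ) < 1`. The `k = 1` part of
`[z^n] C(z)` is `∑_μ [z^n] g^μ / μ`. For subexponential weights `[z^n] g^μ ∼ μ g(ρ)^(μ-1) g_n`
(induction on `μ`: the convolution splits into two short ends and a negligible middle), and
Kesten's bound `[z^n] g^μ ≤ C μ β^(μ-1) g_n` with `g(ρ) < β < 1` dominates the series in `μ`,
whose limit is `∑_μ g(ρ)^(μ-1) = (1 - g(ρ))⁻¹`. A term with `k ≥ 2` only involves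
`[z^j] g^μ ≤ g(ρ)^μ ρ^(-j)` with `2 j ≤ n`, whereas `g_n ρ^n` decays subexponentially, so it is
`O(g(ρ)^μ s^n g_n)` for a fixed `s < 1`. Dominated convergence (Tannery's theorem) over both
indices `(k, μ)` then gives the limit.
-/

open Filter Finset PowerSeries Topology

noncomputable def coeffPow (b : ℕ → ℝ) (μ n : ℕ) : ℝ :=
  coeff n (mk b ^ μ)

section coeffPow

variable {b : ℕ → ℝ}

lemma coeffPow_zero (n : ℕ) : coeffPow b 0 n = if n = 0 then 1 else 0 := by
  simp [coeffPow, coeff_one]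

@[simp] lemma coeffPow_one (n : ℕ) : coeffPow b 1 n = b n := by
  simp [coeffPow]

lemma coeffPow_succ (μ n : ℕ) :
    coeffPow b (μ + 1) n = ∑ i ∈ range (n + 1), b i * coeffPow b μ (n - i) := by
  rw [coeffPow, pow_succ', coeff_mul, Nat.sum_antidiagonal_eq_sum_range_succ_mk]
  simp [coeffPow]

lemma coeffPow_nonneg (hb : ∀ n, 0 ≤ b n) (μ n : ℕ) : 0 ≤ coeffPow b μ n := by
  induction μ generalizing n with
  | zero => rw [coeffPow_zero]; positivity
  | succ μ ih => rw [coeffPow_succ]; exact sum_nonneg fun i _ => mul_nonneg (hb i) (ih _)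

lemma coeffPow_eq_zero_of_not_dvd {d : ℕ} (hb : ∀ n, ¬ d ∣ n → b n = 0) (μ : ℕ) {n : ℕ}
    (hn : ¬ d ∣ n) : coeffPow b μ n = 0 := by
  induction μ generalizing n with
  | zero => rw [coeffPow_zero, if_neg (by rintro rfl; exact hn (dvd_zero d))]
  | succ μ ih =>
    rw [coeffPow_succ]
    refine sum_eq_zero fun i hi => ?_
    by_cases hi' : d ∣ i
    · have : ¬ d ∣ n - i := fun h => hn <| by
        simpa [Nat.sub_add_cancel (Nat.lt_succ_iff.mp (mem_range.mp hi))] using dvd_add h hi'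
      rw [ih this, mul_zero]
    · rw [hb i hi', zero_mul]

lemma hasSum_coeffPow (hb : ∀ n, 0 ≤ b n) (hs : Summable b) (μ : ℕ) :
    HasSum (coeffPow b μ) ((∑' n, b n) ^ μ) := by
  induction μ with
  | zero => simpa [funext coeffPow_zero] using hasSum_ite_eq 0 (1 : ℝ)
  | succ μ ih =>
    have hnorm : ∀ {f : ℕ → ℝ}, (∀ n, 0 ≤ f n) → Summable f → Summable fun n => ‖f n‖ :=
      fun hf hs => hs.congr fun n => (Real.norm_of_nonneg (hf n)).symm
    have hconv : ∀ n, ∑ kl ∈ antidiagonal n, b kl.1 * coeffPow b μ kl.2 = coeffPow b (μ + 1) n :=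
      fun n => by rw [coeffPow_succ, Nat.sum_antidiagonal_eq_sum_range_succ_mk]
    rw [pow_succ', ← ih.tsum_eq, tsum_mul_tsum_eq_tsum_sum_antidiagonal_of_summable_norm
      (hnorm hb hs) (hnorm (coeffPow_nonneg hb μ) ih.summable), tsum_congr hconv]
    exact ((summable_sum_mul_antidiagonal_of_summable_norm' (hnorm hb hs) hs
      (hnorm (coeffPow_nonneg hb μ) ih.summable) ih.summable).congr hconv).hasSum

lemma coeffPow_le_tsum_pow (hb : ∀ n, 0 ≤ b n) (hs : Summable b) (μ n : ℕ) :
    coeffPow b μ n ≤ (∑' n, b n) ^ μ :=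
  (hasSum_coeffPow hb hs μ).summable.le_tsum n (fun k _ => coeffPow_nonneg hb μ k)
    |>.trans_eq (hasSum_coeffPow hb hs μ).tsum_eq

lemma coeffPow_mul_pow (a : ℕ → ℝ) (ρ : ℝ) (μ n : ℕ) :
    coeffPow (fun k => a k * ρ ^ k) μ n = ρ ^ n * coeffPow a μ n := by
  have : mk (fun k => a k * ρ ^ k) = rescale ρ (mk a) := by
    ext k; simp [coeff_rescale, mul_comm]
  rw [coeffPow, this, ← map_pow, coeff_rescale, coeffPow]

end coeffPow

lemma tendsto_of_approx {α : Type*} {l : Filter α} {x : α → ℝ} {y w : ℕ → α → ℝ}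
    {Λ δ : ℕ → ℝ} {L : ℝ} (hy : ∀ M, Tendsto (y M) l (𝓝 (Λ M))) (hΛ : Tendsto Λ atTop (𝓝 L))
    (hw : ∀ M, Tendsto (w M) l (𝓝 (δ M))) (hδ : Tendsto δ atTop (𝓝 0))
    (hxy : ∀ᶠ M in atTop, ∀ᶠ a in l, |x a - y M a| ≤ w M a) : Tendsto x l (𝓝 L) := by
  rw [Metric.tendsto_nhds]
  intro ε hε
  obtain ⟨M, hM, hΛM, hδM⟩ := (hxy.and ((Metric.tendsto_nhds.1 hΛ (ε / 3) (by positivity)).and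
    (hδ.eventually_lt_const (show 0 < ε / 3 by positivity)))).exists
  filter_upwards [hM, Metric.tendsto_nhds.1 (hy M) (ε / 3) (by positivity),
    (hw M).eventually_lt_const hδM] with a hxa hya hwa
  rw [Real.dist_eq] at *
  calc |x a - L| ≤ |x a - y M a| + |y M a - Λ M| + |Λ M - L| := by
        have := abs_add_three (x a - y M a) (y M a - Λ M) (Λ M - L)
        ring_nf at this ⊢; linarith
    _ < ε := by linarith

lemma sum_range_mul_sub_eq_add (u v : ℕ → ℝ) {n K : ℕ} (hK : K ≤ n + 1) :
    ∑ i ∈ range (n + 1), u i * v (n - i) =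
      ∑ i ∈ range (n + 1 - K), u i * v (n - i) + ∑ j ∈ range K, u (n - j) * v j := by
  have hrefl : ∑ j ∈ range K, u (n - j) * v j = ∑ j ∈ range K, u (n - j) * v (n - (n - j)) :=
    sum_congr rfl fun j hj => by rw [Nat.sub_sub_self (by simp at hj; omega)]
  rw [hrefl, range_eq_Ico (a := K), sum_Ico_reflect (fun i => u i * v (n - i)) 0 hK, Nat.sub_zero,
    sum_range_add_sum_Ico _ (Nat.sub_le (n + 1) K)]

lemma exists_forall_one_le_mul (u : ℕ → ℝ) (N : ℕ) : ∃ C, ∀ m < N, 0 < u m → 1 ≤ C * u m := by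
  refine ⟨∑ k ∈ range N, |u k|⁻¹, fun m hm hpos => ?_⟩
  have : |u m|⁻¹ ≤ ∑ k ∈ range N, |u k|⁻¹ :=
    single_le_sum (f := fun k => |u k|⁻¹) (fun k _ => inv_nonneg.2 (abs_nonneg _)) (mem_range.2 hm)
  rw [abs_of_pos hpos] at this
  calc (1 : ℝ) = (u m)⁻¹ * u m := (inv_mul_cancel₀ hpos.ne').symm
    _ ≤ _ := mul_le_mul_of_nonneg_right this hpos.le

/-- The rescaled coefficients `b n = g n * ρ ^ n` of a series `g ∈ 𝒮_d` of radius of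
convergence `ρ`. -/
structure IsSubexponential (d : ℕ) (b : ℕ → ℝ) : Prop where
  period_pos : 0 < d
  nonneg : ∀ n, 0 ≤ b n
  eq_zero_of_not_dvd : ∀ n, ¬ d ∣ n → b n = 0
  summable : Summable b
  eventually_pos : ∀ᶠ m in atTop, 0 < b (d * m)
  tendsto_ratio : Tendsto (fun m => b (d * m) / b (d * (m + 1))) atTop (𝓝 1)
  tendsto_conv : Tendsto (fun m => (∑ i ∈ range (d * m + 1), b i * b (d * m - i)) / b (d * m))
    atTop (𝓝 (2 * ∑' n, b n))

namespace IsSubexponential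

variable {d : ℕ} {b : ℕ → ℝ} (hb : IsSubexponential d b)
include hb

lemma le_mul (m : ℕ) : m ≤ d * m := Nat.le_mul_of_pos_left m hb.period_pos

lemma tendsto_div_self : Tendsto (fun m => b (d * m) / b (d * m)) atTop (𝓝 1) :=
  tendsto_const_nhds.congr' <| hb.eventually_pos.mono fun _ hm => (div_self hm.ne').symm

lemma tendsto_div_add (t : ℕ) : Tendsto (fun m => b (d * m) / b (d * (m + t))) atTop (𝓝 1) := by
  induction t with
  | zero => exact hb.tendsto_div_self
  | succ t ih =>
    have := ih.mul (hb.tendsto_ratio.comp (tendsto_add_atTop_nat t))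
    rw [mul_one] at this
    refine this.congr' ?_
    filter_upwards [(tendsto_add_atTop_nat t).eventually hb.eventually_pos] with m hm
    simp only [Function.comp_apply, ← add_assoc]
    rw [div_mul_div_cancel₀ hm.ne']

lemma tendsto_sub_div_of_tendsto {h : ℕ → ℝ} {c : ℝ}
    (hh : Tendsto (fun m => h (d * m) / b (d * m)) atTop (𝓝 c)) {j : ℕ} (hj : d ∣ j) :
    Tendsto (fun m => h (d * m - j) / b (d * m)) atTop (𝓝 c) := by
  obtain ⟨t, rfl⟩ := hj
  have := ((hh.mul (hb.tendsto_div_add t)).comp (tendsto_sub_atTop_nat t))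
  rw [mul_one] at this
  refine this.congr' ?_
  filter_upwards [eventually_ge_atTop t,
    (tendsto_sub_atTop_nat t).eventually hb.eventually_pos] with m hmt hm
  simp only [Function.comp_apply, Nat.sub_add_cancel hmt] at hm ⊢
  rw [div_mul_div_cancel₀ hm.ne', Nat.mul_sub]

lemma tendsto_sub_div {j : ℕ} (hj : d ∣ j) :
    Tendsto (fun m => b (d * m - j) / b (d * m)) atTop (𝓝 1) :=
  hb.tendsto_sub_div_of_tendsto hb.tendsto_div_self hj

lemma tendsto_sum_mul_sub_div {h : ℕ → ℝ} {c : ℝ}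
    (hh : Tendsto (fun m => h (d * m) / b (d * m)) atTop (𝓝 c)) (K : ℕ) :
    Tendsto (fun m => (∑ i ∈ range K, b i * h (d * m - i)) / b (d * m)) atTop
      (𝓝 ((∑ i ∈ range K, b i) * c)) := by
  simp_rw [sum_div, sum_mul, mul_div_assoc]
  refine tendsto_finsetSum _ fun i _ => ?_
  by_cases hi : d ∣ i
  · exact (hb.tendsto_sub_div_of_tendsto hh hi).const_mul (b i)
  · simp only [hb.eq_zero_of_not_dvd i hi, zero_mul]
    exact tendsto_const_nhds

lemma tendsto_sum_sub_mul_div {h : ℕ → ℝ} (hh : ∀ n, ¬ d ∣ n → h n = 0) (K : ℕ) :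
    Tendsto (fun m => (∑ j ∈ range K, b (d * m - j) * h j) / b (d * m)) atTop
      (𝓝 (∑ j ∈ range K, h j)) := by
  simp_rw [sum_div, mul_div_right_comm]
  refine tendsto_finsetSum _ fun j _ => ?_
  by_cases hj : d ∣ j
  · simpa using (hb.tendsto_sub_div hj).mul_const (h j)
  · simp only [hh j hj, mul_zero]
    exact tendsto_const_nhds

lemma tendsto_sum_range_sub_div (K : ℕ) :
    Tendsto (fun m => (∑ i ∈ range (d * m + 1 - K), b i * b (d * m - i)) / b (d * m)) atTop
      (𝓝 (2 * ∑' n, b n - ∑ j ∈ range K, b j)) := by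
  refine (hb.tendsto_conv.sub (hb.tendsto_sum_sub_mul_div hb.eq_zero_of_not_dvd K)).congr' ?_
  filter_upwards [eventually_ge_atTop K] with m hm
  rw [← sub_div, sum_range_mul_sub_eq_add b b (n := d * m) (K := K)
    (by have := hb.le_mul m; omega), add_sub_cancel_right]

lemma tendsto_sum_Ico_div (K : ℕ) :
    Tendsto (fun m => (∑ i ∈ Ico K (d * m + 1 - K), b i * b (d * m - i)) / b (d * m)) atTop
      (𝓝 (2 * ∑' n, b n - 2 * ∑ j ∈ range K, b j)) := by
  have := (hb.tendsto_sum_range_sub_div K).sub (hb.tendsto_sum_mul_sub_div hb.tendsto_div_self K)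
  rw [mul_one, sub_sub, ← two_mul] at this
  refine this.congr' ?_
  filter_upwards [eventually_ge_atTop (2 * K)] with m hm
  rw [← sub_div, ← sum_range_add_sum_Ico _ (by have := hb.le_mul m; omega : K ≤ d * m + 1 - K),
    add_sub_cancel_left]

lemma tendsto_conv_div_of_tendsto {h : ℕ → ℝ} {c T : ℝ} {S : ℕ} (hh0 : ∀ n, 0 ≤ h n)
    (hhd : ∀ n, ¬ d ∣ n → h n = 0) (hhs : Summable h)
    (hh : Tendsto (fun m => h (d * m) / b (d * m)) atTop (𝓝 c))
    (hT : ∀ n, S ≤ n → h n ≤ T * b n) :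
    Tendsto (fun m => (∑ i ∈ range (d * m + 1), b i * h (d * m - i)) / b (d * m)) atTop
      (𝓝 ((∑' n, b n) * c + ∑' n, h n)) := by
  refine tendsto_of_approx
    (y := fun K m => (∑ i ∈ range K, b i * h (d * m - i)) / b (d * m) +
      (∑ j ∈ range K, b (d * m - j) * h j) / b (d * m))
    (w := fun K m => T * ((∑ i ∈ Ico K (d * m + 1 - K), b i * b (d * m - i)) / b (d * m)))
    (fun K => (hb.tendsto_sum_mul_sub_div hh K).add (hb.tendsto_sum_sub_mul_div hhd K))
    ((hb.summable.hasSum.tendsto_sum_nat.mul_const c).add hhs.hasSum.tendsto_sum_nat)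
    (fun K => (hb.tendsto_sum_Ico_div K).const_mul T) ?_ ?_
  · have := ((hb.summable.hasSum.tendsto_sum_nat.const_mul 2).const_sub
      (2 * ∑' n, b n)).const_mul T
    rwa [sub_self, mul_zero] at this
  filter_upwards [eventually_ge_atTop S] with K hK
  filter_upwards [eventually_ge_atTop (2 * K), hb.eventually_pos] with m hm hpos
  have hKn : K ≤ d * m + 1 - K := by have := hb.le_mul m; omega
  have hsplit : (∑ i ∈ range (d * m + 1), b i * h (d * m - i)) / b (d * m) -
      ((∑ i ∈ range K, b i * h (d * m - i)) / b (d * m) +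
        (∑ j ∈ range K, b (d * m - j) * h j) / b (d * m)) =
      (∑ i ∈ Ico K (d * m + 1 - K), b i * h (d * m - i)) / b (d * m) := by
    rw [sum_range_mul_sub_eq_add b h (n := d * m) (K := K) (by omega),
      ← sum_range_add_sum_Ico _ hKn]
    ring
  have hmid : ∑ i ∈ Ico K (d * m + 1 - K), b i * h (d * m - i) ≤
      T * ∑ i ∈ Ico K (d * m + 1 - K), b i * b (d * m - i) := by
    rw [mul_sum]
    refine sum_le_sum fun i hi => ?_
    have : S ≤ d * m - i := by simp only [mem_Ico] at hi; omega
    nlinarith [hT _ this, hb.nonneg i]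
  rw [hsplit, abs_of_nonneg (div_nonneg (sum_nonneg fun i _ => mul_nonneg (hb.nonneg i) (hh0 _))
    hpos.le), ← mul_div_assoc]
  exact div_le_div_of_nonneg_right hmid hpos.le

lemma eventually_sum_range_sub_le {β : ℝ} (hβ : ∑' n, b n < β) :
    ∀ᶠ S in atTop, ∀ᶠ m in atTop,
      ∑ i ∈ range (d * m + 1 - S), b i * b (d * m - i) ≤ β * b (d * m) := by
  have hlim := (hb.summable.hasSum.tendsto_sum_nat.const_sub (2 * ∑' n, b n))
  rw [show 2 * ∑' n, b n - ∑' n, b n = ∑' n, b n by ring] at hlim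
  filter_upwards [hlim.eventually_lt_const hβ] with S hS
  filter_upwards [(hb.tendsto_sum_range_sub_div S).eventually_lt_const hS,
    hb.eventually_pos] with m hm hpos
  exact ((div_lt_iff₀ hpos).1 hm).le

lemma eventually_sub_le_two_mul (S : ℕ) :
    ∀ᶠ m in atTop, ∀ j < S, d ∣ j → b (d * m - j) ≤ 2 * b (d * m) := by
  have : ∀ j ∈ range S, ∀ᶠ m in atTop, d ∣ j → b (d * m - j) ≤ 2 * b (d * m) := by
    intro j _
    by_cases hj : d ∣ j
    · filter_upwards [(hb.tendsto_sub_div hj).eventually_lt_const one_lt_two,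
        hb.eventually_pos] with m hm hpos _
      exact ((div_lt_iff₀ hpos).1 hm).le
    · exact Eventually.of_forall fun _ h => absurd h hj
  filter_upwards [(eventually_all_finset _).2 this] with m hm j hj
  exact hm j (mem_range.2 hj)

lemma coeffPow_succ_succ_le {α β : ℝ} {S μ n : ℕ}
    (hα : ∀ k, S ≤ k → coeffPow b (μ + 1) k ≤ α * b k) (hα0 : 0 ≤ α) (hS : S ≤ n + 1)
    (hconv : ∑ i ∈ range (n + 1 - S), b i * b (n - i) ≤ β * b n)
    (hnear : ∀ j < S, d ∣ j → b (n - j) ≤ 2 * b n) :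
    coeffPow b (μ + 2) n ≤ (α * β + 2 * S * (∑' k, b k) ^ (μ + 1)) * b n := by
  have hfar : ∑ i ∈ range (n + 1 - S), b i * coeffPow b (μ + 1) (n - i) ≤ α * (β * b n) := by
    refine le_trans ?_ (mul_le_mul_of_nonneg_left hconv hα0)
    rw [mul_sum]
    refine sum_le_sum fun i hi => ?_
    have := hα (n - i) (by simp only [mem_range] at hi; omega)
    nlinarith [hb.nonneg i]
  have hclose : ∑ j ∈ range S, b (n - j) * coeffPow b (μ + 1) j ≤
      S * (2 * b n * (∑' k, b k) ^ (μ + 1)) := by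
    refine (sum_le_card_nsmul _ _ _ fun j hj => ?_).trans_eq (by rw [card_range, nsmul_eq_mul])
    by_cases hdj : d ∣ j
    · exact mul_le_mul (hnear j (mem_range.1 hj) hdj)
        (coeffPow_le_tsum_pow hb.nonneg hb.summable _ _)
        (coeffPow_nonneg hb.nonneg _ _) (by linarith [hb.nonneg n])
    · rw [coeffPow_eq_zero_of_not_dvd hb.eq_zero_of_not_dvd _ hdj, mul_zero]
      exact mul_nonneg (mul_nonneg zero_le_two (hb.nonneg n))
        (pow_nonneg (tsum_nonneg hb.nonneg) _)
  rw [coeffPow_succ, sum_range_mul_sub_eq_add _ _ hS]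
  linarith

/-- Kesten's bound. -/
lemma exists_coeffPow_le {β : ℝ} (hβ : ∑' n, b n < β) :
    ∃ C S, 1 ≤ C ∧ ∀ μ n, S ≤ n → coeffPow b (μ + 1) n ≤ C * (μ + 1) * β ^ μ * b n := by
  set B := ∑' n, b n
  have hB0 : 0 ≤ B := tsum_nonneg hb.nonneg
  have hβ0 : 0 ≤ β := hB0.trans hβ.le
  obtain ⟨M₁, hM₁⟩ := eventually_atTop.1 hb.eventually_pos
  obtain ⟨S, hS, hSM₁⟩ :=
    ((hb.eventually_sum_range_sub_le hβ).and (eventually_ge_atTop (d * M₁))).exists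
  obtain ⟨M₂, hM₂⟩ := eventually_atTop.1 (hS.and (hb.eventually_sub_le_two_mul S))
  obtain ⟨C₀, hC₀⟩ := exists_forall_one_le_mul (fun m => b (d * m)) M₂
  set C := max 1 (max (β * C₀) (2 * S))
  have hC1 : 1 ≤ C := le_max_left _ _
  have hC0 : 0 ≤ C := zero_le_one.trans hC1
  have hsmall : ∀ μ m, S ≤ d * m → m < M₂ →
      coeffPow b (μ + 1) (d * m) ≤ C * (μ + 1) * β ^ μ * b (d * m) := by
    intro μ m hSm hm
    have hpos := hM₁ m (Nat.le_of_mul_le_mul_left (hSM₁.trans hSm) hb.period_pos)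
    calc coeffPow b (μ + 1) (d * m) ≤ β ^ μ * β * 1 := by
          rw [← pow_succ, mul_one]
          exact (coeffPow_le_tsum_pow hb.nonneg hb.summable _ _).trans
            (pow_le_pow_left₀ hB0 hβ.le _)
      _ ≤ β ^ μ * β * (C₀ * b (d * m)) := by gcongr; exact hC₀ m hm hpos
      _ = β * C₀ * (β ^ μ * b (d * m)) := by ring
      _ ≤ C * (μ + 1) * (β ^ μ * b (d * m)) := by
          refine mul_le_mul_of_nonneg_right ?_ (mul_nonneg (by positivity) (hb.nonneg _))
          exact ((le_max_left _ _).trans (le_max_right _ _)).trans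
            (le_mul_of_one_le_right hC0 (by simp))
      _ = C * (μ + 1) * β ^ μ * b (d * m) := by ring
  refine ⟨C, S, hC1, fun μ => ?_⟩
  induction μ with
  | zero => intro n _; simpa using le_mul_of_one_le_left (hb.nonneg n) hC1
  | succ μ ih =>
    intro n hn
    by_cases hdn : d ∣ n
    swap
    · rw [coeffPow_eq_zero_of_not_dvd hb.eq_zero_of_not_dvd _ hdn]
      exact mul_nonneg (by positivity) (hb.nonneg n)
    obtain ⟨m, rfl⟩ := hdn
    by_cases hm : m < M₂
    · exact hsmall (μ + 1) m hn hm
    obtain ⟨hconv, hnear⟩ := hM₂ m (not_lt.1 hm)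
    refine (hb.coeffPow_succ_succ_le ih (by positivity) (by omega) hconv hnear).trans ?_
    have hB : 2 * S * B ^ (μ + 1) ≤ C * β ^ (μ + 1) :=
      mul_le_mul ((le_max_right _ _).trans (le_max_right _ _)) (pow_le_pow_left₀ hB0 hβ.le _)
        (by positivity) hC0
    calc (C * (μ + 1) * β ^ μ * β + 2 * S * B ^ (μ + 1)) * b (d * m)
        ≤ (C * (μ + 1) * β ^ (μ + 1) + C * β ^ (μ + 1)) * b (d * m) := by
          rw [mul_assoc _ (β ^ μ), ← pow_succ]
          exact mul_le_mul_of_nonneg_right (add_le_add_right hB _) (hb.nonneg _)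
      _ = C * ((μ + 1 : ℕ) + 1) * β ^ (μ + 1) * b (d * m) := by push_cast; ring

lemma tendsto_coeffPow_div (μ : ℕ) :
    Tendsto (fun m => coeffPow b (μ + 1) (d * m) / b (d * m)) atTop
      (𝓝 ((μ + 1) * (∑' n, b n) ^ μ)) := by
  obtain ⟨C, S, -, hC⟩ := hb.exists_coeffPow_le (lt_add_one (∑' n, b n))
  induction μ with
  | zero => simpa using hb.tendsto_div_self
  | succ μ ih =>
    have hsum := hasSum_coeffPow hb.nonneg hb.summable (μ + 1)
    have := hb.tendsto_conv_div_of_tendsto (coeffPow_nonneg hb.nonneg _)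
      (fun _ => coeffPow_eq_zero_of_not_dvd hb.eq_zero_of_not_dvd _) hsum.summable ih (hC μ)
    rw [hsum.tsum_eq] at this
    convert this using 2 with m
    · rw [coeffPow_succ]
    · push_cast; ring

lemma tendsto_pow_div {r : ℝ} (hr0 : 0 < r) (hr1 : r < 1) :
    Tendsto (fun m => r ^ (d * m) / b (d * m)) atTop (𝓝 0) := by
  refine Summable.tendsto_atTop_zero <| summable_of_ratio_test_tendsto_lt_one
    (pow_lt_one₀ hr0.le hr1 hb.period_pos.ne') (hb.eventually_pos.mono fun m hm => by positivity)
    ?_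
  have := hb.tendsto_ratio.const_mul (r ^ d)
  rw [mul_one] at this
  refine this.congr' ?_
  filter_upwards [hb.eventually_pos, (tendsto_add_atTop_nat 1).eventually hb.eventually_pos]
    with m hm hm1
  rw [Real.norm_of_nonneg (by positivity), Real.norm_of_nonneg (by positivity), mul_add_one,
    pow_add]
  field_simp

end IsSubexponential

/-- The summand indexed by `(k - 1, μ - 1)` in
`[z^n] C(z) = ∑_{k ∣ n} ∑_{μ ≥ 1} φ(k) / (k μ) · [z^(n/k)] g(z)^μ`. -/
noncomputable def cycleTerm (a : ℕ → ℝ) (n : ℕ) (q : ℕ × ℕ) : ℝ :=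
  (Nat.totient (q.1 + 1) : ℝ) / ((q.1 + 1) * (q.2 + 1)) *
    if q.1 + 1 ∣ n then coeffPow a (q.2 + 1) (n / (q.1 + 1)) else 0

section cycleTerm

variable {a : ℕ → ℝ}

lemma cycleTerm_nonneg (ha : ∀ n, 0 ≤ a n) (n : ℕ) (q : ℕ × ℕ) : 0 ≤ cycleTerm a n q := by
  unfold cycleTerm
  split_ifs
  · exact mul_nonneg (by positivity) (coeffPow_nonneg ha _ _)
  · rw [mul_zero]

lemma cycleTerm_zero_left (n μ : ℕ) : cycleTerm a n (0, μ) = coeffPow a (μ + 1) n / (μ + 1) := by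
  simp [cycleTerm, div_eq_inv_mul]

lemma cycleTerm_succ_left_mul_pow_le (ha : ∀ n, 0 ≤ a n) {ρ : ℝ} (hρ0 : 0 < ρ) (hρ1 : ρ ≤ 1)
    (hs : Summable fun n => a n * ρ ^ n) (n k μ : ℕ) :
    cycleTerm a n (k + 1, μ) * ρ ^ n ≤ (∑' i, a i * ρ ^ i) ^ (μ + 1) * √ρ ^ n := by
  have hb0 : ∀ n, 0 ≤ a n * ρ ^ n := fun n => mul_nonneg (ha n) (pow_nonneg hρ0.le n)
  unfold cycleTerm
  split_ifs with hdvd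
  swap
  · rw [mul_zero, zero_mul]
    exact mul_nonneg (pow_nonneg (tsum_nonneg hb0) _) (by positivity)
  set j := n / (k + 1 + 1)
  have hj : 2 * j ≤ n :=
    (Nat.mul_le_mul_right j (by omega : 2 ≤ k + 1 + 1)).trans (Nat.mul_div_le n _)
  have hcoef : (Nat.totient (k + 1 + 1) : ℝ) / ((↑(k + 1) + 1) * (μ + 1)) ≤ 1 := by
    rw [div_le_one (by positivity)]
    calc (Nat.totient (k + 1 + 1) : ℝ) ≤ ↑(k + 1) + 1 := by exact_mod_cast Nat.totient_le _
      _ ≤ (↑(k + 1) + 1) * (μ + 1) := le_mul_of_one_le_right (by positivity) (by simp)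
  have hpow : ρ ^ n = ρ ^ j * ρ ^ (n - j) := by rw [← pow_add]; congr 1; omega
  have hsqrt : ρ ^ (n - j) ≤ √ρ ^ n := by
    calc ρ ^ (n - j) = √ρ ^ (2 * (n - j)) := by rw [pow_mul, Real.sq_sqrt hρ0.le]
      _ ≤ √ρ ^ n := pow_le_pow_of_le_one (Real.sqrt_nonneg ρ) (Real.sqrt_le_one.2 hρ1) (by omega)
  calc _ ≤ 1 * (coeffPow a (μ + 1) j * ρ ^ n) := by
        rw [mul_assoc]
        exact mul_le_mul_of_nonneg_right hcoef
          (mul_nonneg (coeffPow_nonneg ha _ _) (pow_nonneg hρ0.le _))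
    _ = coeffPow (fun i => a i * ρ ^ i) (μ + 1) j * ρ ^ (n - j) := by
        rw [one_mul, coeffPow_mul_pow, hpow]; ring
    _ ≤ _ := mul_le_mul (coeffPow_le_tsum_pow hb0 hs _ _) hsqrt (by positivity)
        (pow_nonneg (tsum_nonneg hb0) _)

end cycleTerm

lemma SubexpClass.isSubexponential {d : ℕ} {g : ℕ → ℝ} {ρ : ℝ} (h : SubexpClass d g ρ) :
    IsSubexponential d (fun n => g n * ρ ^ n) := by
  obtain ⟨hd, hρ, hg0, hgd, ⟨N, hN⟩, hs, -, hratio, hconv⟩ := h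
  have hρn : ∀ n, ρ ^ n ≠ 0 := fun n => (pow_pos hρ n).ne'
  refine ⟨hd, fun n => mul_nonneg (hg0 n) (pow_pos hρ n).le,
    fun n hn => by rw [hgd n hn, zero_mul], hs, ?_, ?_, ?_⟩
  · filter_upwards [eventually_ge_atTop N] with m hm
    exact mul_pos (hN _ (hm.trans (Nat.le_mul_of_pos_left m hd)) (dvd_mul_right d m))
      (pow_pos hρ _)
  · have := hratio.mul_const (ρ ^ d)⁻¹
    rw [mul_inv_cancel₀ (hρn d)] at this
    refine this.congr fun m => ?_
    rw [mul_add_one, pow_add, mul_div_mul_comm, div_mul_cancel_left₀ (hρn _)]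
  · refine hconv.congr fun m => ?_
    have : ∀ i ∈ range (d * m + 1), g i * ρ ^ i * (g (d * m - i) * ρ ^ (d * m - i)) =
        g i * g (d * m - i) * ρ ^ (d * m) := fun i hi => by
      rw [← Nat.add_sub_cancel' (Nat.lt_succ_iff.1 (mem_range.1 hi))]
      simp only [Nat.add_sub_cancel_left, pow_add]
      ring
    rw [sum_congr rfl this, ← sum_mul, mul_div_mul_right _ _ (hρn _)]

section Asymptotics

variable {d : ℕ} {a : ℕ → ℝ} {ρ : ℝ}

lemma IsSubexponential.nonneg_of_mul_pow (hb : IsSubexponential d (fun n => a n * ρ ^ n))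
    (hρ0 : 0 < ρ) (n : ℕ) : 0 ≤ a n :=
  nonneg_of_mul_nonneg_left (hb.nonneg n) (pow_pos hρ0 n)

lemma cycleTerm_zero_left_div (hρ : ρ ≠ 0) (n μ : ℕ) :
    cycleTerm a n (0, μ) / a n =
      coeffPow (fun k => a k * ρ ^ k) (μ + 1) n / (a n * ρ ^ n) / (μ + 1) := by
  rw [cycleTerm_zero_left, coeffPow_mul_pow, div_right_comm, mul_comm (ρ ^ n),
    mul_div_mul_right _ _ (pow_ne_zero n hρ)]

lemma eventually_cycleTerm_succ_left_div_le (hρ0 : 0 < ρ) (hρ1 : ρ ≤ 1)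
    (hb : IsSubexponential d (fun n => a n * ρ ^ n)) {r : ℝ} (hr0 : 0 < r) (hr1 : r < 1) :
    ∀ᶠ m in atTop, ∀ k μ, cycleTerm a (d * m) (k + 1, μ) / a (d * m) ≤
      (∑' n, a n * ρ ^ n) ^ (μ + 1) * (√ρ / r) ^ (d * m) := by
  filter_upwards [(hb.tendsto_pow_div hr0 hr1).eventually_lt_const one_pos, hb.eventually_pos]
    with m hgrowth hpos k μ
  rw [div_lt_one hpos] at hgrowth
  calc cycleTerm a (d * m) (k + 1, μ) / a (d * m)
      = cycleTerm a (d * m) (k + 1, μ) * ρ ^ (d * m) / (a (d * m) * ρ ^ (d * m)) := by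
        rw [mul_div_mul_right _ _ (pow_pos hρ0 _).ne']
    _ ≤ (∑' n, a n * ρ ^ n) ^ (μ + 1) * ((√ρ / r) ^ (d * m) * r ^ (d * m)) /
          (a (d * m) * ρ ^ (d * m)) := by
        rw [← mul_pow, div_mul_cancel₀ _ hr0.ne']
        exact div_le_div_of_nonneg_right (cycleTerm_succ_left_mul_pow_le
          (hb.nonneg_of_mul_pow hρ0) hρ0 hρ1 hb.summable _ _ _) hpos.le
    _ ≤ (∑' n, a n * ρ ^ n) ^ (μ + 1) * (√ρ / r) ^ (d * m) := by
        rw [← mul_assoc, div_le_iff₀ hpos]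
        exact mul_le_mul_of_nonneg_left hgrowth.le
          (mul_nonneg (pow_nonneg (tsum_nonneg hb.nonneg) _) (by positivity))

lemma tendsto_cycleTerm_div (hρ0 : 0 < ρ) (hρ1 : ρ ≤ 1)
    (hb : IsSubexponential d (fun n => a n * ρ ^ n)) {r : ℝ} (hρr : √ρ < r) (hr1 : r < 1)
    (q : ℕ × ℕ) : Tendsto (fun m => cycleTerm a (d * m) q / a (d * m)) atTop
      (𝓝 (if q.1 = 0 then (∑' n, a n * ρ ^ n) ^ q.2 else 0)) := by
  have hr0 : 0 < r := (Real.sqrt_nonneg ρ).trans_lt hρr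
  obtain ⟨_ | k, μ⟩ := q
  · simp only [cycleTerm_zero_left_div hρ0.ne', if_true]
    convert (hb.tendsto_coeffPow_div μ).div_const ((μ : ℝ) + 1) using 2
    field_simp
  · refine squeeze_zero' (Eventually.of_forall fun m => div_nonneg
      (cycleTerm_nonneg (hb.nonneg_of_mul_pow hρ0) _ _) (hb.nonneg_of_mul_pow hρ0 _))
      ((eventually_cycleTerm_succ_left_div_le hρ0 hρ1 hb hr0 hr1).mono fun m hm => hm k μ) ?_
    simpa using ((tendsto_pow_atTop_nhds_zero_of_lt_one (by positivity)
      ((div_lt_one hr0).2 hρr)).comp (tendsto_atTop_mono hb.le_mul tendsto_id)).const_mul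
      ((∑' n, a n * ρ ^ n) ^ (μ + 1))

lemma exists_summable_bound_cycleTerm_div (hρ0 : 0 < ρ) (hρ1 : ρ ≤ 1)
    (hb : IsSubexponential d (fun n => a n * ρ ^ n)) (hB : ∑' n, a n * ρ ^ n < 1) {r : ℝ}
    (hρr : √ρ < r) (hr1 : r < 1) :
    ∃ bound : ℕ × ℕ → ℝ, Summable bound ∧
      ∀ᶠ m in atTop, ∀ q, ‖cycleTerm a (d * m) q / a (d * m)‖ ≤ bound q := by
  set B := ∑' n, a n * ρ ^ n
  have hB0 : 0 ≤ B := tsum_nonneg hb.nonneg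
  have hr0 : 0 < r := (Real.sqrt_nonneg ρ).trans_lt hρr
  set s := √ρ / r
  have hs1 : s < 1 := (div_lt_one hr0).2 hρr
  obtain ⟨C, S, hC1, hC⟩ := hb.exists_coeffPow_le (show B < (1 + B) / 2 by linarith)
  set β := (1 + B) / 2 with hβ
  refine ⟨fun q => C * (s ^ q.1 * β ^ q.2),
    ((summable_geometric_of_lt_one (by positivity) hs1).mul_of_nonneg
      (summable_geometric_of_lt_one (by positivity) (by linarith))
      (fun _ => by positivity) (fun _ => by positivity)).mul_left C, ?_⟩
  filter_upwards [eventually_cycleTerm_succ_left_div_le hρ0 hρ1 hb hr0 hr1, hb.eventually_pos,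
    eventually_ge_atTop S, eventually_ge_atTop 1] with m hoff hpos hmS hm1
  rintro ⟨_ | k, μ⟩ <;> rw [Real.norm_of_nonneg (div_nonneg
    (cycleTerm_nonneg (hb.nonneg_of_mul_pow hρ0) _ _) (hb.nonneg_of_mul_pow hρ0 _))]
  · rw [cycleTerm_zero_left_div hρ0.ne', div_div, div_le_iff₀ (by positivity)]
    calc _ ≤ C * (μ + 1) * β ^ μ * (a (d * m) * ρ ^ (d * m)) := hC μ _ (hmS.trans (hb.le_mul m))
      _ = _ := by ring
  · by_cases hk : k + 1 + 1 ∣ d * m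
    · have hkn : k + 1 ≤ d * m :=
        Nat.le_of_dvd (by linarith [hb.le_mul m]) hk |>.trans' (Nat.le_succ _)
      refine (hoff k μ).trans ?_
      calc B ^ (μ + 1) * s ^ (d * m) ≤ β ^ μ * s ^ (k + 1) := by
            refine mul_le_mul ?_ (pow_le_pow_of_le_one (by positivity) hs1.le hkn)
              (by positivity) (by positivity)
            exact (pow_le_pow_of_le_one hB0 hB.le (Nat.le_succ μ)).trans
              (pow_le_pow_left₀ hB0 (by linarith) μ)
        _ ≤ C * (s ^ (k + 1) * β ^ μ) := by
            rw [mul_comm (β ^ μ)]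
            exact le_mul_of_one_le_left (by positivity) hC1
    · simp only [cycleTerm, hk, if_false, mul_zero, zero_div]
      positivity

theorem tendsto_tsum_cycleTerm_div (hρ0 : 0 < ρ) (hρ1 : ρ < 1)
    (hb : IsSubexponential d (fun n => a n * ρ ^ n)) (hB : ∑' n, a n * ρ ^ n < 1) :
    Tendsto (fun m => (∑' q, cycleTerm a (d * m) q) / a (d * m)) atTop
      (𝓝 (1 - ∑' n, a n * ρ ^ n)⁻¹) := by
  obtain ⟨r, hρr, hr1⟩ := exists_between ((Real.sqrt_lt' one_pos).2 (by linarith) : √ρ < 1)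
  obtain ⟨bound, hsum, hbound⟩ :=
    exists_summable_bound_cycleTerm_div hρ0 hρ1.le hb hB hρr hr1
  have hlimit : ∑' q : ℕ × ℕ, (if q.1 = 0 then (∑' n, a n * ρ ^ n) ^ q.2 else 0) =
      (1 - ∑' n, a n * ρ ^ n)⁻¹ := by
    rw [← (Prod.mk_right_injective 0).tsum_eq,
      ← tsum_geometric_of_lt_one (tsum_nonneg hb.nonneg) hB]
    · simp
    · rintro ⟨k, μ⟩ hq
      simp only [Function.mem_support, ne_eq, ite_eq_right_iff, not_forall] at hq
      exact ⟨μ, by rw [hq.1]⟩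
  simp_rw [← tsum_div_const, ← hlimit]
  exact tendsto_tsum_of_dominated_convergence hsum
    (tendsto_cycleTerm_div hρ0 hρ1.le hb hρr hr1) hbound

end Asymptotics

theorem cycle_series_coeff_asymptotics_general (d : ℕ) (g : ℕ → ℕ) (ρ : ℝ)
    (hρ1 : ρ < 1)
    (hsub : SubexpClass d (fun k => (g k : ℝ)) ρ)
    (hgρ : (∑' k, (g k : ℝ) * ρ ^ k) < 1) :
    Filter.Tendsto
      (fun m =>
        (∑' q : ℕ × ℕ,
            ((Nat.totient (q.1 + 1) : ℝ) / (((q.1 : ℕ) + 1) * ((q.2 : ℕ) + 1))) *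
              (if (q.1 + 1) ∣ (d * m) then
                PowerSeries.coeff ((d * m) / (q.1 + 1))
                  ((PowerSeries.mk (fun k => (g k : ℝ))) ^ (q.2 + 1))
              else 0))
          / (g (d * m) : ℝ))
      Filter.atTop
      (nhds ((1 - ∑' k, (g k : ℝ) * ρ ^ k)⁻¹)) :=
  tendsto_tsum_cycleTerm_div hsub.2.1 hρ1 hsub.isSubexponential hgρ

/-- Cyclic arrangements: let `(g_k)_{k ≥ 1}` be non-negative integers, supported on multiples
of `d`, with generating series `g ∈ 𝒮_d`, radius of convergence `ρ ∈ (0,1)` and `g(ρ) < 1`.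
The cycle generating series `C(z) = ∑_{k ≥ 1} (φ(k)/k) log(1/(1 - g(z^k)))` has `n`-th
coefficient `∑_{k,m ≥ 1} (φ(k)/(km)) [z^{n/k}] g(z)^m` (the term appearing only when `k ∣ n`);
these satisfy `[z^n] C(z) ∼ (1 - g(ρ))⁻¹ [z^n] g(z)` along multiples of `d`. -/
theorem cycle_series_coeff_asymptotics (d : ℕ) (g : ℕ → ℕ) (ρ : ℝ)
    (hg0 : g 0 = 0) (hρ1 : ρ < 1)
    (hsub : SubexpClass d (fun k => (g k : ℝ)) ρ)
    (hgρ : (∑' k, (g k : ℝ) * ρ ^ k) < 1) :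
    Filter.Tendsto
      (fun m =>
        (∑' q : ℕ × ℕ,
            ((Nat.totient (q.1 + 1) : ℝ) / (((q.1 : ℕ) + 1) * ((q.2 : ℕ) + 1))) *
              (if (q.1 + 1) ∣ (d * m) then
                PowerSeries.coeff ((d * m) / (q.1 + 1))
                  ((PowerSeries.mk (fun k => (g k : ℝ))) ^ (q.2 + 1))
              else 0))
          / (g (d * m) : ℝ))
      Filter.atTop
      (nhds ((1 - ∑' k, (g k : ℝ) * ρ ^ k)⁻¹)) :=
  cycle_series_coeff_asymptotics_general d g ρ hρ1 hsub hgρ
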